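/- arXiv:1801.00517 — 3 statements merged into one kernel-verified Lean document; each statement's English description precedes it below -/
import Mathlib

section
/- Let a, b be coprime integers with b > 0, and write S(a,b) = k/q in lowest terms with q > 0. Then q = b / gcd(b, a²+1). -/
/-- The sawtooth function on rationals. -/
def saw (x : ℚ) : ℚ := if x.den = 1 then 0 else Int.fract x - 1/2

/-- The normalized Dedekind sum `S(a,b) = 12 s(a,b)`. -/
def S (a b : ℤ) : ℚ :=
  12 * ∑ k ∈ Finset.Icc 1 b.toNat, saw ((k : ℚ) / (b : ℚ)) * saw (((a : ℚ) * k) / (b : ℚ))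

/-! With `r_k = a k mod b` for `1 ≤ k < b`, the `r_k` permute `1, …, b - 1`. Expanding the sawtooth
products gives `b² S(a,b) = 12 ∑ k r_k - 3 b² (b - 1)`, and since `a k - r_k` is divisible by `b`,
summing its squares gives `2 a ∑ k r_k ≡ (a² + 1) ∑ k² (mod b²)`. Together, `S(a,b) = N / b` with
`a N ≡ a² + 1 (mod b)`; as `a` is a unit mod `b`, `gcd(b, N) = gcd(b, a² + 1)`, and the reduced
denominator of `N / b` is `b / gcd(b, N)`. -/

open Finset

lemma saw_intCast (m : ℤ) : saw m = 0 := by simp [saw]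

lemma saw_intCast_add (m : ℤ) (x : ℚ) : saw (m + x) = saw x := by
  simp only [saw, Rat.intCast_add_den, Int.fract_intCast_add]

lemma saw_div_of_pos_of_lt {r b : ℤ} (hr : 0 < r) (hrb : r < b) :
    saw (r / b) = r / b - 1 / 2 := by
  have hb : (0 : ℚ) < b := by exact_mod_cast hr.trans hrb
  have hfract : Int.fract ((r : ℚ) / b) = r / b :=
    Int.fract_eq_self.2 ⟨by positivity, (div_lt_one hb).2 (by exact_mod_cast hrb)⟩
  have hden : ((r : ℚ) / b).den ≠ 1 := by
    rw [Ne, Rat.den_div_intCast_eq_one_iff r b (by omega)]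
    exact fun h => absurd (Int.le_of_dvd hr h) (by omega)
  simp only [saw, hden, hfract, if_false]

lemma saw_div_emod (x b : ℤ) : saw (x / b) = saw ((x % b : ℤ) / b) := by
  rcases eq_or_ne b 0 with rfl | hb
  · simp
  · conv_lhs => rw [← Int.mul_ediv_add_emod x b]
    rw [Int.cast_add, Int.cast_mul, add_div, mul_div_cancel_left₀ _ (by exact_mod_cast hb),
      saw_intCast_add]

lemma sum_Ico_one_natCast (n : ℕ) : ∑ k ∈ Ico 1 n, (k : ℚ) = n * (n - 1) / 2 := by
  induction n with
  | zero => simp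
  | succ n ih =>
    rcases Nat.eq_zero_or_pos n with rfl | hn
    · simp
    · rw [sum_Ico_succ_top hn, ih]; push_cast; ring

lemma six_mul_sum_Ico_one_sq (n : ℕ) :
    6 * ∑ k ∈ Ico 1 n, (k : ℤ) ^ 2 = n * (n - 1) * (2 * n - 1) := by
  induction n with
  | zero => simp
  | succ n ih =>
    rcases Nat.eq_zero_or_pos n with rfl | hn
    · simp
    · rw [sum_Ico_succ_top hn, mul_add, ih]; push_cast; ring

section Residues

variable {a : ℤ} {n : ℕ}

lemma emod_mul_pos (h : IsCoprime a n) {k : ℕ} (hk : k ∈ Ico 1 n) : 0 < a * k % n := by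
  obtain ⟨hk1, hkn⟩ := mem_Ico.1 hk
  refine lt_of_le_of_ne (Int.emod_nonneg _ (by omega)) fun h0 => ?_
  have := Int.le_of_dvd (by omega) (h.symm.dvd_of_dvd_mul_left (Int.dvd_of_emod_eq_zero h0.symm))
  omega

lemma sum_Ico_emod_mul {M : Type*} [AddCommMonoid M] (h : IsCoprime a n) (f : ℤ → M) :
    ∑ k ∈ Ico 1 n, f (a * k % n) = ∑ k ∈ Ico 1 n, f k := by
  set i : ℕ → ℕ := fun k => (a * k % n).toNat
  have hi : ∀ k ∈ Ico 1 n, (i k : ℤ) = a * k % n := fun k hk =>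
    Int.toNat_of_nonneg (emod_mul_pos h hk).le
  have hmaps : ∀ k ∈ Ico 1 n, i k ∈ Ico 1 n := by
    intro k hk
    have hpos := emod_mul_pos h hk
    have hlt := Int.emod_lt_of_pos (a * k) (show (0 : ℤ) < n by simp at hk; omega)
    have := hi k hk
    rw [mem_Ico]; omega
  have hinj : Set.InjOn i (Ico 1 n) := by
    intro j hj k hk hjk
    have hmod : a * j ≡ a * k [ZMOD n] := by
      have := congrArg (fun m : ℕ => (m : ℤ)) hjk
      simp only [hi j hj, hi k hk] at this
      exact this
    have hdvd : (n : ℤ) ∣ k - j := h.symm.dvd_of_dvd_mul_left (by rw [mul_sub]; exact hmod.dvd)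
    simp only [coe_Ico, Set.mem_Ico] at hj hk
    have := Int.eq_zero_of_abs_lt_dvd hdvd (by rw [abs_lt]; omega)
    omega
  exact sum_nbij i hmaps hinj (surjOn_of_injOn_of_card_le i hmaps hinj le_rfl)
    fun k hk => by rw [hi k hk]

end Residues

section DedekindSum

variable {a : ℤ} {n : ℕ}

lemma S_eq_sum_Ico (hn : 0 < n) (h : IsCoprime a n) :
    S a n = 12 * ∑ k ∈ Ico 1 n, ((k : ℚ) / n - 1 / 2) * ((a * k % n : ℤ) / n - 1 / 2) := by
  have hn' : (n : ℚ) ≠ 0 := by positivity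
  have hlast : saw ((n : ℚ) / n) = 0 := by rw [div_self hn']; exact_mod_cast saw_intCast 1
  rw [S, Int.toNat_natCast, ← Ico_add_one_right_eq_Icc, sum_Ico_succ_top hn]
  push_cast
  rw [hlast, zero_mul, add_zero]
  congr 1
  refine sum_congr rfl fun k hk => ?_
  obtain ⟨hk1, hkn⟩ := mem_Ico.1 hk
  have hsaw_k := saw_div_of_pos_of_lt (r := k) (b := n) (by omega) (by omega)
  have hsaw_ak := saw_div_of_pos_of_lt (emod_mul_pos h hk) (Int.emod_lt_of_pos _ (by omega))
  rw [← saw_div_emod] at hsaw_ak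
  push_cast at hsaw_k hsaw_ak
  rw [hsaw_k, hsaw_ak]

lemma sq_mul_S_eq (hn : 0 < n) (h : IsCoprime a n) :
    (n : ℚ) ^ 2 * S a n =
      12 * ((∑ k ∈ Ico 1 n, k * (a * k % n) : ℤ) : ℚ) - 3 * n ^ 2 * (n - 1) := by
  have hn' : (n : ℚ) ≠ 0 := by positivity
  have hres : ∑ k ∈ Ico 1 n, ((a * k % n : ℤ) : ℚ) = n * (n - 1) / 2 := by
    rw [sum_Ico_emod_mul h (fun x => (x : ℚ))]; push_cast; exact sum_Ico_one_natCast n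
  have hcard : ((Ico 1 n).card : ℚ) = n - 1 := by
    rw [Nat.card_Ico, Nat.cast_sub (by omega)]; simp
  have hterm : ∀ k ∈ Ico 1 n, (n : ℚ) ^ 2 * (((k : ℚ) / n - 1 / 2) * ((a * k % n : ℤ) / n - 1 / 2))
      = k * (a * k % n : ℤ) - n / 2 * k - n / 2 * (a * k % n : ℤ) + n ^ 2 / 4 := by
    intro k _; field_simp; ring
  rw [S_eq_sum_Ico hn h, mul_left_comm, mul_sum, sum_congr rfl hterm, sum_add_distrib,
    sum_sub_distrib, sum_sub_distrib, ← mul_sum, ← mul_sum, sum_const, nsmul_eq_mul, hcard, hres,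
    sum_Ico_one_natCast]
  push_cast
  ring

lemma two_mul_sum_mul_emod (h : IsCoprime a n) :
    2 * a * ∑ k ∈ Ico 1 n, k * (a * k % n) =
      (a ^ 2 + 1) * ∑ k ∈ Ico 1 n, (k : ℤ) ^ 2 - n ^ 2 * ∑ k ∈ Ico 1 n, (a * k / n) ^ 2 := by
  have hpt (k : ℕ) : 2 * a * (k * (a * k % n)) =
      a ^ 2 * k ^ 2 + (a * k % n) ^ 2 - n ^ 2 * (a * k / n) ^ 2 := by
    have := Int.mul_ediv_add_emod (a * k) n
    linear_combination (n * (a * k / n) + a * k - a * k % n) * this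
  rw [mul_sum, sum_congr rfl fun k _ => hpt k, sum_sub_distrib, sum_add_distrib,
    sum_Ico_emod_mul h (fun x => x ^ 2), ← mul_sum, ← mul_sum]
  ring

theorem exists_S_eq_div_and_mul_modEq (hn : 0 < n) (h : IsCoprime a n) :
    ∃ N : ℤ, S a n = N / n ∧ a * N ≡ a ^ 2 + 1 [ZMOD n] := by
  set T := ∑ k ∈ Ico 1 n, k * (a * k % n)
  set P := ∑ k ∈ Ico 1 n, (a * k / n) ^ 2
  have hn' : (n : ℤ) ≠ 0 := by positivity
  -- `12 T - 3 n² (n - 1)` is `n² S`, so cancelling the unit `a` shows `n ∣ n² S`.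
  have hx : a * (12 * T - 3 * n ^ 2 * (n - 1)) =
      n * ((a ^ 2 + 1) * (n - 1) * (2 * n - 1) - 6 * n * P - 3 * a * n * (n - 1)) := by
    linear_combination 6 * two_mul_sum_mul_emod h + (a ^ 2 + 1) * six_mul_sum_Ico_one_sq n
  obtain ⟨N, hN⟩ : (n : ℤ) ∣ 12 * T - 3 * n ^ 2 * (n - 1) :=
    h.symm.dvd_of_dvd_mul_left ⟨_, hx⟩
  refine ⟨N, ?_, ?_⟩
  · have hNQ : (12 * T - 3 * n ^ 2 * (n - 1) : ℚ) = n * N := by exact_mod_cast hN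
    have := sq_mul_S_eq hn h
    rw [eq_div_iff (by positivity)]
    apply mul_left_cancel₀ (show (n : ℚ) ≠ 0 by positivity)
    linear_combination this + hNQ
  · have haN : a * N = (a ^ 2 + 1) * (n - 1) * (2 * n - 1) - 6 * n * P - 3 * a * n * (n - 1) :=
      mul_left_cancel₀ hn' (by rw [← hx, hN]; ring)
    rw [Int.modEq_iff_dvd]
    exact ⟨6 * P + 3 * a * (n - 1) - (a ^ 2 + 1) * (2 * n - 3), by rw [haN]; ring⟩

end DedekindSum

lemma gcd_eq_gcd_of_mul_modEq {a b c n : ℤ} (h : IsCoprime a n) (hb : a * b ≡ c [ZMOD n]) :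
    Int.gcd n b = Int.gcd n c := by
  rw [Int.gcd_comm, Int.gcd_comm n, ← Int.gcd_emod c, ← hb, Int.gcd_emod, Int.gcd, Int.gcd,
    Int.natAbs_mul]
  exact (Nat.Coprime.gcd_mul_left_cancel _ (Int.isCoprime_iff_gcd_eq_one.mp h)).symm

lemma eq_div_gcd_of_div_eq_div {N n k q : ℤ} (hn : 0 < n) (hq : 0 < q) (hkq : IsCoprime k q)
    (h : (N / n : ℚ) = k / q) : q = n / Int.gcd n N := by
  have hden := Rat.den_div_eq_of_coprime hq (Int.isCoprime_iff_gcd_eq_one.mp hkq)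
  rw [← h, ← Rat.divInt_eq_div, Rat.den_divInt, if_neg hn.ne'] at hden
  rw [← hden, Int.natCast_div, Int.natAbs_of_nonneg hn.le]

theorem stmt2 (a b k q : ℤ) (hb : 0 < b) (hab : IsCoprime a b) (hq : 0 < q)
    (hkq : IsCoprime k q) (hS : S a b = (k : ℚ) / q) :
    q = b / (Int.gcd b (a ^ 2 + 1) : ℤ) := by
  lift b to ℕ using hb.le with n
  obtain ⟨N, hSN, hmod⟩ := exists_S_eq_div_and_mul_modEq (by exact_mod_cast hb) hab
  rw [← gcd_eq_gcd_of_mul_modEq hab hmod]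
  exact eq_div_gcd_of_div_eq_div hb hq hkq (by rw [Int.cast_natCast, ← hSN, hS])
end

section
/- Let a, b, q be integers with b, q > 0 and gcd(a,b) = 1. Then S(a,b) = k/q for some integer k with gcd(k,q) = 1 if and only if b = q(a²+1)/t for some positive integer t with gcd(t,q) = 1 (and t dividing a²+1). -/
open Finset

lemma saw_of_pos_of_lt_one {x : ℚ} (h0 : 0 < x) (h1 : x < 1) : saw x = x - 1 / 2 := by
  have hden : x.den ≠ 1 := by
    intro h
    have hx : x = (x.num : ℚ) := (Rat.den_eq_one_iff x).mp h |>.symm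
    rw [hx] at h0 h1
    norm_cast at h0 h1
    omega
  rw [saw, if_neg hden, Int.fract_eq_self.mpr ⟨h0.le, h1⟩]

namespace ZMod

variable {n : ℕ} [NeZero n] {M : Type*} [AddCommMonoid M]

lemma sum_comp_val (f : ℕ → M) : ∑ x : ZMod n, f x.val = ∑ k ∈ range n, f k := by
  obtain ⟨m, rfl⟩ := Nat.exists_eq_succ_of_ne_zero (NeZero.ne n)
  exact Fin.sum_univ_eq_sum_range f (m + 1)

lemma sum_Icc_one_comp_natCast (g : ZMod n → M) : ∑ k ∈ Icc 1 n, g k = ∑ x, g x := by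
  rw [← Finset.Ico_add_one_right_eq_Icc, sum_Ico_eq_sum_range, Nat.add_sub_cancel]
  push_cast
  rw [← sum_comp_val fun k => g (1 + k)]
  simp only [natCast_zmod_val]
  exact Equiv.sum_comp (Equiv.addLeft (1 : ZMod n)) g

lemma sum_comp_mul_left {a : ℤ} (ha : IsCoprime a n) (g : ZMod n → M) :
    ∑ x, g (a * x) = ∑ x, g x :=
  Equiv.sum_comp (unitOfIsCoprime a ha).mulLeft g

end ZMod

lemma saw_intCast_div_natCast (m : ℤ) (n : ℕ) [NeZero n] :
    saw (m / n) = saw (((m : ZMod n).val : ℚ) / n) := by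
  have hn : (n : ℚ) ≠ 0 := Nat.cast_ne_zero.mpr (NeZero.ne n)
  have hsplit : (m : ℚ) / n = ((m / n : ℤ) : ℚ) + ((m % n : ℤ) : ℚ) / n := by
    rw [Int.emod_def]
    push_cast
    field_simp
    ring
  rw [hsplit, saw_intCast_add, ← ZMod.val_intCast, Int.cast_natCast]

lemma S_natCast_eq_sum_saw (a : ℤ) (n : ℕ) [NeZero n] :
    S a n = 12 * ∑ x : ZMod n, saw (x.val / n) * saw ((a * x : ZMod n).val / n) := by
  rw [S, Int.toNat_natCast, ← ZMod.sum_Icc_one_comp_natCast]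
  congr 1
  refine sum_congr rfl fun k _ => ?_
  have hk := saw_intCast_div_natCast k n
  have hak := saw_intCast_div_natCast (a * k) n
  push_cast at hk hak
  rw [Int.cast_natCast, hk, hak]

lemma six_mul_sum_range_sq (n : ℕ) :
    6 * ∑ k ∈ range n, (k : ℤ) ^ 2 = n * (n - 1) * (2 * n - 1) := by
  induction n with
  | zero => simp
  | succ m ih => rw [sum_range_succ]; push_cast; linear_combination ih

section DedekindSum

variable {a : ℤ} {n : ℕ} [NeZero n]

lemma S_natCast_eq_sum_val_mul_val (ha : IsCoprime a n) :
    S a n = 12 * ((∑ x : ZMod n, x.val * (a * x : ZMod n).val : ℕ) : ℚ) / n ^ 2 - 3 * (n - 1) := by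
  have hn : (n : ℚ) ≠ 0 := Nat.cast_ne_zero.mpr (NeZero.ne n)
  set σ : ZMod n → ℚ := fun x => x.val / n - 1 / 2 with hσ
  have hsaw : ∀ x : ZMod n, x ≠ 0 → saw (x.val / n) = σ x := fun x hx =>
    saw_of_pos_of_lt_one (div_pos (mod_cast ZMod.val_pos.mpr hx) (by positivity))
      ((div_lt_one (by positivity)).mpr (mod_cast ZMod.val_lt x))
  have hunit : ∀ x : ZMod n, x ≠ 0 → (a * x : ZMod n) ≠ 0 := fun x hx =>
    mt (ZMod.unitOfIsCoprime a ha).isUnit.mul_right_eq_zero.mp hx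
  have hzero : ∑ x : ZMod n, saw (x.val / n) * saw ((a * x : ZMod n).val / n) =
      ∑ x, σ x * σ (a * x) - 1 / 4 := by
    rw [Fintype.sum_eq_add_sum_compl 0, Fintype.sum_eq_add_sum_compl (0 : ZMod n)]
    have hrest : ∑ x ∈ {0}ᶜ, saw ((x : ZMod n).val / n) * saw ((a * x : ZMod n).val / n) =
        ∑ x ∈ {0}ᶜ, σ x * σ (a * x) := sum_congr rfl fun x hx => by
      rw [mem_compl, mem_singleton] at hx
      rw [hsaw x hx, hsaw _ (hunit x hx)]
    rw [hrest]
    norm_num [hσ, saw]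
  have hperm : ∑ x : ZMod n, ((a * x : ZMod n).val : ℚ) = ∑ x : ZMod n, (x.val : ℚ) :=
    ZMod.sum_comp_mul_left ha fun x => (x.val : ℚ)
  have hgauss : ∑ x : ZMod n, (x.val : ℚ) = n * (n - 1) / 2 := by
    rw [ZMod.sum_comp_val fun k => (k : ℚ), ← Nat.cast_sum, eq_div_iff two_ne_zero,
      ← Nat.cast_two, ← Nat.cast_mul, sum_range_id_mul_two, Nat.cast_mul, Nat.cast_pred (NeZero.pos n)]
  rw [S_natCast_eq_sum_saw, hzero]
  simp only [hσ, sub_mul, mul_sub, sum_sub_distrib, ← sum_div, ← mul_sum, ← sum_mul, hperm]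
  push_cast
  simp only [div_mul_div_comm, ← sum_div, sum_const, card_univ, ZMod.card, nsmul_eq_mul, mul_one,
    hgauss]
  field_simp
  ring

lemma sq_dvd_twelve_mul_sum_val_mul_val_sub (ha : IsCoprime a n) :
    (n : ℤ) ^ 2 ∣ 12 * a * (∑ x : ZMod n, x.val * (a * x : ZMod n).val : ℕ) - (a ^ 2 + 1) * n := by
  have hcong : ∀ x : ZMod n, (n : ℤ) ∣ (a * x : ZMod n).val - a * x.val := fun x =>
    (ZMod.intCast_eq_intCast_iff_dvd_sub _ _ n).mp (by simp)
  obtain ⟨c, hc⟩ : (n : ℤ) ^ 2 ∣ ∑ x : ZMod n, (((a * x : ZMod n).val : ℤ) - a * x.val) ^ 2 :=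
    dvd_sum fun x _ => pow_dvd_pow_of_dvd (hcong x) 2
  have hperm : ∑ x : ZMod n, ((a * x : ZMod n).val : ℤ) ^ 2 = ∑ x : ZMod n, (x.val : ℤ) ^ 2 :=
    ZMod.sum_comp_mul_left ha fun x => (x.val : ℤ) ^ 2
  have hsq : 6 * ∑ x : ZMod n, (x.val : ℤ) ^ 2 = n * (n - 1) * (2 * n - 1) := by
    rw [ZMod.sum_comp_val fun k => (k : ℤ) ^ 2, six_mul_sum_range_sq]
  have hexpand : ∑ x : ZMod n, (((a * x : ZMod n).val : ℤ) - a * x.val) ^ 2 =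
      (a ^ 2 + 1) * ∑ x : ZMod n, (x.val : ℤ) ^ 2 -
        2 * a * ∑ x : ZMod n, (x.val : ℤ) * (a * x : ZMod n).val := by
    calc _ = ∑ x : ZMod n, (((a * x : ZMod n).val : ℤ) ^ 2 + a ^ 2 * (x.val : ℤ) ^ 2 -
          2 * a * ((x.val : ℤ) * (a * x : ZMod n).val)) := sum_congr rfl fun x _ => by ring
      _ = _ := by rw [sum_sub_distrib, sum_add_distrib, hperm, ← mul_sum, ← mul_sum]; ring
  push_cast
  exact ⟨-6 * c + (a ^ 2 + 1) * (2 * n - 3),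
    by linear_combination 6 * hexpand - 6 * hc + (a ^ 2 + 1) * hsq⟩

lemma exists_S_natCast_eq_div (ha : IsCoprime a n) :
    ∃ m : ℤ, S a n = m / n ∧ (n : ℤ) ∣ m * a - (a ^ 2 + 1) := by
  set P : ℕ := ∑ x : ZMod n, x.val * (a * x : ZMod n).val
  have hn : (n : ℤ) ≠ 0 := Nat.cast_ne_zero.mpr (NeZero.ne n)
  obtain ⟨d, hd⟩ := sq_dvd_twelve_mul_sum_val_mul_val_sub ha
  obtain ⟨c, hc⟩ : (n : ℤ) ∣ 12 * P := ha.symm.dvd_of_dvd_mul_left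
    ⟨n * d + (a ^ 2 + 1), by linear_combination hd⟩
  refine ⟨c - 3 * n * (n - 1), ?_, ⟨d - 3 * (n - 1) * a, ?_⟩⟩
  · have hcQ : 12 * (P : ℚ) = n * c := by exact_mod_cast hc
    have hnQ : (n : ℚ) ≠ 0 := by exact_mod_cast hn
    rw [S_natCast_eq_sum_val_mul_val ha, hcQ]
    push_cast
    field_simp
  · apply mul_left_cancel₀ hn
    linear_combination hd - a * hc

end DedekindSum

theorem Rat.exists_isCoprime_eq_div_iff (x : ℚ) {q : ℤ} (hq : 0 < q) :
    (∃ k : ℤ, IsCoprime k q ∧ x = k / q) ↔ (x.den : ℤ) = q := by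
  constructor
  · rintro ⟨k, hk, rfl⟩
    exact_mod_cast Rat.den_div_eq_of_coprime hq (Int.isCoprime_iff_gcd_eq_one.mp hk)
  · rintro rfl
    exact ⟨x.num, Int.isCoprime_iff_gcd_eq_one.mpr x.reduced, (Rat.num_div_den x).symm⟩

lemma den_S {a b : ℤ} (hb : 0 < b) (hab : IsCoprime a b) :
    ((S a b).den : ℤ) = b / Int.gcd b (a ^ 2 + 1) := by
  lift b to ℕ using hb.le
  have : NeZero b := ⟨by omega⟩
  obtain ⟨m, hS, w, hw⟩ := exists_S_natCast_eq_div hab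
  have hgcd : Int.gcd b m = Int.gcd b (a ^ 2 + 1) := by
    rw [← Int.gcd_mul_left_right_of_gcd_eq_one (Int.isCoprime_iff_gcd_eq_one.mp hab.symm),
      show m * a = a ^ 2 + 1 + b * w by linear_combination hw, Int.gcd_add_mul_left_right]
  rw [hS, ← Int.cast_natCast b, Rat.intCast_div_eq_divInt, Rat.den_divInt, if_neg (by omega),
    hgcd, Int.natAbs_natCast, Int.natCast_ediv]

lemma exists_isCoprime_dvd_mul_eq_mul_iff {b c q : ℤ} (hc : 0 < c) :
    (∃ t, 0 < t ∧ IsCoprime t q ∧ t ∣ c ∧ b * t = q * c) ↔ q = b / Int.gcd b c := by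
  constructor
  · rintro ⟨t, ht, htq, ⟨u, rfl⟩, hbt⟩
    have hu : 0 < u := pos_of_mul_pos_right hc ht.le
    have hb : b = q * u := mul_right_cancel₀ ht.ne' (by linear_combination hbt)
    rw [hb, Int.gcd_mul_right, Int.isCoprime_iff_gcd_eq_one.mp htq.symm, one_mul,
      Int.natAbs_of_nonneg hu.le, Int.mul_ediv_cancel _ hu.ne']
  · rintro rfl
    have hg : 0 < Int.gcd b c := Int.gcd_pos_of_ne_zero_right b hc.ne'
    refine ⟨c / Int.gcd b c, Int.ediv_pos_of_pos_of_dvd hc (by positivity) (Int.gcd_dvd_right b c),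
      ?_, Int.ediv_dvd_of_dvd (Int.gcd_dvd_right b c), ?_⟩
    · rw [isCoprime_comm, Int.isCoprime_iff_gcd_eq_one]
      exact Int.gcd_ediv_gcd_ediv_gcd hg
    · rw [← Int.mul_ediv_assoc b (Int.gcd_dvd_right b c),
        ← Int.mul_ediv_assoc' c (Int.gcd_dvd_left b c)]

theorem stmt3 (a b q : ℤ) (hb : 0 < b) (hq : 0 < q) (hab : IsCoprime a b) :
    (∃ k : ℤ, IsCoprime k q ∧ S a b = (k : ℚ) / q) ↔
      (∃ t : ℤ, 0 < t ∧ IsCoprime t q ∧ t ∣ a ^ 2 + 1 ∧ b * t = q * (a ^ 2 + 1)) := by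
  rw [Rat.exists_isCoprime_eq_div_iff _ hq, den_S hb hab,
    exists_isCoprime_dvd_mul_eq_mul_iff (by positivity), eq_comm]
end

section
/- Fix q ≥ 2. For integers a, t, t* with t > 0, t | a²+1, gcd(aq, t) = 1, and t·t* ≡ 1 (mod q), define λ(a,t,t*) = (q²−1)a/t − (q²−1)a·t* − q·S(aq, t). Then λ(a,t,t*) ≡ 0 (mod q). -/
open Finset

lemma saw_intCast_div_of_not_dvd {x t : ℤ} (ht : 0 < t) (hx : ¬ t ∣ x) :
    saw (x / t) = (x % t : ℤ) / t - 1 / 2 := by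
  lift t to ℕ using ht.le
  rw [saw, if_neg (by rwa [Rat.den_div_intCast_eq_one_iff _ _ (by omega)])]
  simp only [Int.cast_natCast, Int.fract_div_intCast_eq_div_intCast_mod]

lemma mul_emod_mul_emod_of_mul_modEq_one {c u t k : ℤ} (hu : u * c ≡ 1 [ZMOD t]) (hk₀ : 0 ≤ k)
    (hkt : k < t) : u * (c * k % t) % t = k := by
  have : u * (c * k % t) ≡ k [ZMOD t] :=
    calc u * (c * k % t) ≡ u * (c * k) [ZMOD t] := (Int.mod_modEq _ _).mul_left u
      _ = (u * c) * k := by ring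
      _ ≡ 1 * k [ZMOD t] := hu.mul_right k
      _ = k := one_mul k
  rw [this, Int.emod_eq_of_lt hk₀ hkt]

lemma mul_emod_mem_Ioo {c u t k : ℤ} (hu : u * c ≡ 1 [ZMOD t]) (hk : k ∈ Ioo 0 t) :
    c * k % t ∈ Ioo 0 t := by
  rw [mem_Ioo] at hk ⊢
  refine ⟨(Int.emod_nonneg _ (by omega)).lt_of_ne fun h ↦ ?_, Int.emod_lt_of_pos _ (by omega)⟩
  have := mul_emod_mul_emod_of_mul_modEq_one hu hk.1.le hk.2
  rw [← h, mul_zero, Int.zero_emod] at this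
  omega

lemma sum_Ioo_comp_mul_emod {M : Type*} [AddCommMonoid M] {c t : ℤ} (hc : IsCoprime c t)
    (g : ℤ → M) : ∑ k ∈ Ioo 0 t, g (c * k % t) = ∑ k ∈ Ioo 0 t, g k := by
  obtain ⟨u, v, huv⟩ := hc
  have huc : u * c ≡ 1 [ZMOD t] := Int.modEq_iff_dvd.mpr ⟨v, by linear_combination -huv⟩
  have hcu : c * u ≡ 1 [ZMOD t] := by rwa [mul_comm]
  refine sum_nbij' (c * · % t) (u * · % t) (fun k hk ↦ mul_emod_mem_Ioo huc hk)
    (fun k hk ↦ mul_emod_mem_Ioo hcu hk) (fun k hk ↦ ?_) (fun k hk ↦ ?_) fun _ _ ↦ rfl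
  · rw [mem_Ioo] at hk; exact mul_emod_mul_emod_of_mul_modEq_one huc hk.1.le hk.2
  · rw [mem_Ioo] at hk; exact mul_emod_mul_emod_of_mul_modEq_one hcu hk.1.le hk.2

lemma two_mul_sum_Ioo_id {t : ℤ} (ht : 0 ≤ t) : 2 * ∑ k ∈ Ioo 0 t, k = t * (t - 1) := by
  induction t, ht using Int.leInduction with
  | base => simp
  | succ t ht ih =>
    rcases ht.eq_or_lt with rfl | ht
    · rfl
    rw [Ioo_add_one_right_eq_Ioc, ← Ioo_insert_right ht, sum_insert right_notMem_Ioo]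
    linear_combination ih

lemma six_mul_sum_Ioo_sq {t : ℤ} (ht : 0 ≤ t) :
    6 * ∑ k ∈ Ioo 0 t, k ^ 2 = (t - 1) * t * (2 * t - 1) := by
  induction t, ht using Int.leInduction with
  | base => simp
  | succ t ht ih =>
    rcases ht.eq_or_lt with rfl | ht
    · rfl
    rw [Ioo_add_one_right_eq_Ioc, ← Ioo_insert_right ht, sum_insert right_notMem_Ioo]
    linear_combination ih

lemma sum_Icc_toNat_eq_sum_Ioc {M : Type*} [AddCommMonoid M] (t : ℤ) (f : ℤ → M) :
    ∑ k ∈ Icc 1 t.toNat, f k = ∑ k ∈ Ioc 0 t, f k :=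
  sum_nbij' (↑) Int.toNat (fun k hk ↦ by simp only [mem_Icc, mem_Ioc] at hk ⊢; omega)
    (fun k hk ↦ by simp only [mem_Icc, mem_Ioc] at hk ⊢; omega) (fun k _ ↦ Int.toNat_natCast k)
    (fun k hk ↦ by simp only [mem_Ioc] at hk; omega) fun _ _ ↦ rfl

lemma sq_mul_S_eq_s7 {c t : ℤ} (hc : IsCoprime c t) (ht : 0 < t) :
    (t : ℚ) ^ 2 * S c t = 3 * ((∑ k ∈ Ioo 0 t, (2 * k - t) * (2 * (c * k % t) - t) : ℤ) : ℚ) := by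
  have ht' : (t : ℚ) ≠ 0 := by exact_mod_cast ht.ne'
  have hterm : ∀ k ∈ Ioo 0 t, saw (k / t) * saw (c * k / t) =
      ((2 * k - t) * (2 * (c * k % t) - t) : ℤ) / (4 * t ^ 2) := by
    intro k hk
    rw [mem_Ioo] at hk
    have hndvd : ¬ t ∣ k := fun h ↦ by have := Int.le_of_dvd hk.1 h; omega
    rw [saw_intCast_div_of_not_dvd ht hndvd, Int.emod_eq_of_lt hk.1.le hk.2, ← Int.cast_mul,
      saw_intCast_div_of_not_dvd ht (fun h ↦ hndvd (hc.symm.dvd_of_dvd_mul_left h))]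
    field_simp
    push_cast
    ring
  have hsum := sum_Icc_toNat_eq_sum_Ioc t fun k : ℤ ↦ saw (k / t) * saw (c * k / t)
  simp only [Int.cast_natCast] at hsum
  rw [S, hsum, ← Ioo_insert_right ht, sum_insert right_notMem_Ioo, div_self ht',
    show saw 1 = 0 from if_pos rfl, zero_mul, zero_add, sum_congr rfl hterm, ← sum_div, Int.cast_sum]
  field_simp
  ring

lemma exists_mul_S_eq_intCast_and_modEq {c t : ℤ} (hc : IsCoprime c t) (ht : 0 < t) :
    ∃ D : ℤ, (t : ℚ) * S c t = D ∧ c * D ≡ c ^ 2 + 1 [ZMOD t] := by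
  set r : ℤ → ℤ := (c * · % t)
  have hQ1 := two_mul_sum_Ioo_id ht.le
  have hQ2 := six_mul_sum_Ioo_sq ht.le
  have hR1 : ∑ k ∈ Ioo 0 t, r k = ∑ k ∈ Ioo 0 t, k := sum_Ioo_comp_mul_emod hc id
  have hR2 : ∑ k ∈ Ioo 0 t, r k ^ 2 = ∑ k ∈ Ioo 0 t, k ^ 2 :=
    sum_Ioo_comp_mul_emod hc (· ^ 2)
  have hdvd : ∀ k, t ∣ c * k - r k := fun k ↦ (Int.mod_modEq (c * k) t).dvd
  obtain ⟨F, hF⟩ : t ∣ c * ∑ k ∈ Ioo 0 t, k ^ 2 - ∑ k ∈ Ioo 0 t, k * r k := by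
    have : ∑ k ∈ Ioo 0 t, k * (c * k - r k) =
        c * ∑ k ∈ Ioo 0 t, k ^ 2 - ∑ k ∈ Ioo 0 t, k * r k := by
      simp only [mul_sum, ← sum_sub_distrib]
      exact sum_congr rfl fun k _ ↦ by ring
    exact this ▸ dvd_sum fun k _ ↦ (hdvd k).mul_left k
  obtain ⟨A, hA⟩ : t ^ 2 ∣
      c ^ 2 * ∑ k ∈ Ioo 0 t, k ^ 2 - 2 * c * ∑ k ∈ Ioo 0 t, k * r k + ∑ k ∈ Ioo 0 t, r k ^ 2 := by
    have : ∑ k ∈ Ioo 0 t, (c * k - r k) ^ 2 =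
        c ^ 2 * ∑ k ∈ Ioo 0 t, k ^ 2 - 2 * c * ∑ k ∈ Ioo 0 t, k * r k
          + ∑ k ∈ Ioo 0 t, r k ^ 2 := by
      simp only [mul_sum, ← sum_sub_distrib, ← sum_add_distrib]
      exact sum_congr rfl fun k _ ↦ by ring
    exact this ▸ dvd_sum fun k _ ↦ pow_dvd_pow_of_dvd (hdvd k) 2
  have hP : ∑ k ∈ Ioo 0 t, (2 * k - t) * (2 * r k - t) =
      4 * ∑ k ∈ Ioo 0 t, k * r k - 2 * t * ∑ k ∈ Ioo 0 t, k - 2 * t * ∑ k ∈ Ioo 0 t, r k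
        + ∑ k ∈ Ioo 0 t, t ^ 2 := by
    simp only [mul_sum, ← sum_sub_distrib, ← sum_add_distrib]
    exact sum_congr rfl fun k _ ↦ by ring
  have hcard : ∑ k ∈ Ioo 0 t, t ^ 2 = (t - 1) * t ^ 2 := by
    rw [sum_const, Int.card_Ioo, nsmul_eq_mul]
    congr 1
    omega
  refine ⟨2 * c * (t - 1) * (2 * t - 1) - 12 * F - 3 * t * (t - 1), ?_, ?_⟩
  · apply mul_left_cancel₀ (by exact_mod_cast ht.ne' : (t : ℚ) ≠ 0)
    rw [← mul_assoc, ← sq, sq_mul_S_eq_s7 hc ht]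
    norm_cast
    linear_combination 3 * hP + 3 * hcard - 6 * t * hR1 - 6 * t * hQ1 - 12 * hF + 2 * c * hQ2
  · refine (Int.modEq_iff_dvd.mpr ⟨(c ^ 2 + 1) * (2 * t - 3) - 6 * A - 3 * c * (t - 1), ?_⟩).symm
    apply mul_left_cancel₀ ht.ne'
    linear_combination 12 * c * hF - 6 * hA + 6 * hR2 + (1 - c ^ 2) * hQ2

theorem stmt7_general (q a t tstar : ℤ) (ht : 0 < t) (hta : t ∣ a ^ 2 + 1)
    (haqt : IsCoprime (a * q) t) (hts : t * tstar ≡ 1 [ZMOD q]) :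
    ∃ n : ℤ, (n : ℚ) = ((q ^ 2 - 1 : ℚ) * a) / t - (q ^ 2 - 1 : ℚ) * a * tstar
        - (q : ℚ) * S (a * q) t ∧ q ∣ n := by
  obtain ⟨D, hD, hDmod⟩ := exists_mul_S_eq_intCast_and_modEq haqt ht
  obtain ⟨E, hE⟩ : t ∣ (q ^ 2 - 1) * a - q * D := by
    apply haqt.symm.dvd_of_dvd_mul_left
    have : a * q * ((q ^ 2 - 1) * a - q * D) =
        q * ((a * q) ^ 2 + 1 - a * q * D) - q * (a ^ 2 + 1) := by ring
    rw [this]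
    exact dvd_sub (hDmod.dvd.mul_left q) (hta.mul_left q)
  refine ⟨E - (q ^ 2 - 1) * a * tstar, ?_, ?_⟩
  · have ht' : (t : ℚ) ≠ 0 := by exact_mod_cast ht.ne'
    have hS : S (a * q) t = D / t := by rw [eq_div_iff ht', mul_comm, hD]
    have hE' : ((q : ℚ) ^ 2 - 1) * a - q * D = t * E := by exact_mod_cast hE
    rw [hS]
    field_simp
    push_cast
    linear_combination -hE'
  · apply haqt.of_mul_left_right.dvd_of_dvd_mul_left
    have : t * (E - (q ^ 2 - 1) * a * tstar) = (q ^ 2 - 1) * a * (1 - t * tstar) - q * D := by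
      linear_combination -hE
    rw [this]
    exact dvd_sub (hts.dvd.mul_left _) (dvd_mul_right q D)

theorem stmt7 (q a t tstar : ℤ) (hq : 2 ≤ q) (ht : 0 < t) (hta : t ∣ a ^ 2 + 1)
    (haqt : IsCoprime (a * q) t) (hts : t * tstar ≡ 1 [ZMOD q]) :
    ∃ n : ℤ, (n : ℚ) = ((q ^ 2 - 1 : ℚ) * a) / t - (q ^ 2 - 1 : ℚ) * a * tstar
        - (q : ℚ) * S (a * q) t ∧ q ∣ n :=
  stmt7_general q a t tstar ht hta haqt hts
end
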